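/- arXiv:1507.02384 — 2 statements merged into one kernel-verified Lean document; each statement's English description precedes it below -/
import Mathlib

section
/- Let G be a finite simple graph whose vertex set is partitioned into disjoint sets A, B, and {x}. Let C be a minimum vertex cover of the bipartite graph G[A ∪ {x}, B] and let C' be the A-König cover of the bipartite graph G[A, B]. Then A ∩ C ⊆ A ∩ C'. -/
open SimpleGraph

/-- A vertex cover of a graph: a set of vertices containing at least one endpoint
of every edge. -/
def IsVertexCover {V : Type} (G : SimpleGraph V) (C : Set V) : Prop :=
  ∀ ⦃u v : V⦄, G.Adj u v → u ∈ C ∨ v ∈ C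

/-- A minimum vertex cover: a vertex cover of smallest cardinality. -/
def IsMinVertexCover {V : Type} (G : SimpleGraph V) (C : Set V) : Prop :=
  _root_.IsVertexCover G C ∧ ∀ C' : Set V, _root_.IsVertexCover G C' → C.ncard ≤ C'.ncard

/-- `(A, B)` is a bipartition of `G`: `A` and `B` are disjoint, cover all vertices,
and every edge joins a vertex of `A` to a vertex of `B`. -/
def IsBipartition {V : Type} (G : SimpleGraph V) (A B : Set V) : Prop :=
  Disjoint A B ∧ A ∪ B = Set.univ ∧
    ∀ ⦃u v : V⦄, G.Adj u v → (u ∈ A ∧ v ∈ B) ∨ (u ∈ B ∧ v ∈ A)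

/-- A matching of `G`: a set of edges of `G` that are pairwise vertex-disjoint. -/
def IsMatching' {V : Type} (G : SimpleGraph V) (M : Set (Sym2 V)) : Prop :=
  M ⊆ G.edgeSet ∧ ∀ e ∈ M, ∀ f ∈ M, e ≠ f → ∀ v : V, ¬ (v ∈ e ∧ v ∈ f)

/-- A maximum matching: a matching of largest cardinality. -/
def IsMaxMatching {V : Type} (G : SimpleGraph V) (M : Set (Sym2 V)) : Prop :=
  IsMatching' G M ∧ ∀ M' : Set (Sym2 V), IsMatching' G M' → M'.ncard ≤ M.ncard

/-- A vertex is `M`-saturated if it is an endpoint of some edge of `M`. -/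
def MSaturated {V : Type} (M : Set (Sym2 V)) (v : V) : Prop :=
  ∃ e ∈ M, v ∈ e

/-- A list of edges is `M`-alternating if consecutive edges alternate between
membership and non-membership in `M`. -/
def AlternatingEdges {V : Type} (M : Set (Sym2 V)) (l : List (Sym2 V)) : Prop :=
  List.Chain' (fun e f => (e ∈ M ↔ f ∉ M)) l

/-- The edge `e` lies on an `M`-alternating path starting at an `M`-unsaturated
vertex of `A`. -/
def OnAltPath {V : Type} (G : SimpleGraph V) (M : Set (Sym2 V)) (A : Set V)
    (e : Sym2 V) : Prop :=
  ∃ (a z : V) (p : G.Walk a z), a ∈ A ∧ ¬ MSaturated M a ∧ p.IsPath ∧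
    AlternatingEdges M p.edges ∧ e ∈ p.edges

/-- The `A`-König cover of `G` constructed from a maximum matching `M`: for each
edge `ab ∈ M` with `a ∈ A` and `b ∈ B`, put `b` into the cover if `ab` lies on an
`M`-alternating path starting at an `M`-unsaturated vertex of `A`, and otherwise
put `a` into the cover. -/
def koenigCoverFrom {V : Type} (G : SimpleGraph V) (M : Set (Sym2 V))
    (A B : Set V) : Set V :=
  {b | b ∈ B ∧ ∃ e ∈ M, b ∈ e ∧ OnAltPath G M A e} ∪
    {a | a ∈ A ∧ ∃ e ∈ M, a ∈ e ∧ ¬ OnAltPath G M A e}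

/-- `C` is the `A`-König cover of the bipartite graph `G` with bipartition `(A,B)`:
the unique minimum vertex cover such that every minimum vertex cover `C'`
satisfies `A ∩ C' ⊆ A ∩ C` and `B ∩ C ⊆ B ∩ C'`. -/
def IsKoenigCover {V : Type} (G : SimpleGraph V) (A B : Set V) (C : Set V) : Prop :=
  IsMinVertexCover G C ∧
    ∀ C' : Set V, IsMinVertexCover G C' → A ∩ C' ⊆ A ∩ C ∧ B ∩ C ⊆ B ∩ C'

/-- `G[S,T]`: the bipartite graph on the vertices of `G` whose edges are exactly
the edges of `G` with one endpoint in `S` and the other in `T`. -/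
def crossingGraph {V : Type} (G : SimpleGraph V) (S T : Set V) : SimpleGraph V where
  Adj u v := G.Adj u v ∧ ((u ∈ S ∧ v ∈ T) ∨ (u ∈ T ∧ v ∈ S))
  symm := ⟨fun u v h =>
    ⟨h.1.symm, h.2.elim (fun h' => Or.inr ⟨h'.2, h'.1⟩) (fun h' => Or.inl ⟨h'.2, h'.1⟩)⟩⟩
  loopless := ⟨fun u h => G.loopless.irrefl u h.1⟩

/-!
Let `τ` be the vertex cover number of `H = G[A,B]` and `H' = G[A ∪ {x}, B]`. The König cover
`C'` avoids the isolated vertex `x` of `H`, and `C' ∪ {x}` covers `H'`, so `τ ≤ |C| ≤ τ + 1`.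
If `|C| = τ`, then `C` is a minimum cover of `H` and the extremality of `C'` applies directly.
Otherwise `C` and `C' ∪ {x}` are both minimum covers of the bipartite graph `H'`, and so is the
cover taking their union on the side `A ∪ {x}` and their intersection on `B`. Removing `x` from
it leaves a minimum cover of `H` that contains `A ∩ C`.
-/

open Set

section VertexCover

variable {V : Type} {H K : SimpleGraph V} {C D : Set V}

theorem IsVertexCover.anti (hHK : H ≤ K) (hC : _root_.IsVertexCover K C) :
    _root_.IsVertexCover H C :=
  fun _ _ h => hC (hHK h)

theorem IsVertexCover.diff_singleton {x : V} (hC : _root_.IsVertexCover K C)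
    (hx : ∀ y, ¬ K.Adj x y) : _root_.IsVertexCover K (C \ {x}) := by
  intro u v h
  have hu : u ≠ x := by rintro rfl; exact hx v h
  have hv : v ≠ x := by rintro rfl; exact hx u h.symm
  exact (hC h).imp (fun hu' => ⟨hu', hu⟩) (fun hv' => ⟨hv', hv⟩)

theorem IsMinVertexCover.of_ncard_le (hC : IsMinVertexCover K C) (hD : _root_.IsVertexCover K D)
    (hDC : D.ncard ≤ C.ncard) : IsMinVertexCover K D :=
  ⟨hD, fun E hE => hDC.trans (hC.2 E hE)⟩

theorem IsMinVertexCover.notMem_of_forall_not_adj [Finite V] {x : V}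
    (hC : IsMinVertexCover K C) (hx : ∀ y, ¬ K.Adj x y) : x ∉ C := fun hxC =>
  (Set.ncard_sdiff_singleton_lt_of_mem hxC).not_ge (hC.2 _ (hC.1.diff_singleton hx))

end VertexCover

section Bipartite

variable {V : Type} {K : SimpleGraph V} {S T : Set V}

def coverSup (S T C₁ C₂ : Set V) : Set V :=
  S ∩ (C₁ ∪ C₂) ∪ T ∩ (C₁ ∩ C₂)

theorem IsBipartition.symm (h : IsBipartition K S T) : IsBipartition K T S :=
  ⟨h.1.symm, by rw [union_comm, h.2.1], fun _ _ huv => (h.2.2 huv).symm⟩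

theorem IsBipartition.isVertexCover_coverSup (h : IsBipartition K S T) {C₁ C₂ : Set V}
    (h₁ : _root_.IsVertexCover K C₁) (h₂ : _root_.IsVertexCover K C₂) :
    _root_.IsVertexCover K (coverSup S T C₁ C₂) := by
  have key : ∀ ⦃u v⦄, K.Adj u v → u ∈ S → v ∈ T →
      u ∈ coverSup S T C₁ C₂ ∨ v ∈ coverSup S T C₁ C₂ := by
    intro u v huv hu hv
    rcases h₁ huv with hu₁ | hv₁
    · exact Or.inl (Or.inl ⟨hu, Or.inl hu₁⟩)
    rcases h₂ huv with hu₂ | hv₂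
    · exact Or.inl (Or.inl ⟨hu, Or.inr hu₂⟩)
    · exact Or.inr (Or.inr ⟨hv, hv₁, hv₂⟩)
  intro u v huv
  rcases h.2.2 huv with ⟨hu, hv⟩ | ⟨hu, hv⟩
  · exact key huv hu hv
  · exact (key huv.symm hv hu).symm

theorem ncard_inter_union_inter [Finite V] (hST : Disjoint S T) (X Y : Set V) :
    (S ∩ X ∪ T ∩ Y).ncard = (S ∩ X).ncard + (T ∩ Y).ncard :=
  ncard_union_eq (hST.mono inter_subset_left inter_subset_left)

theorem ncard_eq_ncard_inter_add_ncard_inter [Finite V] (hST : Disjoint S T)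
    (hU : S ∪ T = univ) (X : Set V) : X.ncard = (S ∩ X).ncard + (T ∩ X).ncard := by
  rw [← ncard_inter_union_inter hST, ← union_inter_distrib_right, hU, univ_inter]

theorem ncard_inter_union_add_ncard_inter_inter [Finite V] (R X Y : Set V) :
    (R ∩ (X ∪ Y)).ncard + (R ∩ (X ∩ Y)).ncard = (R ∩ X).ncard + (R ∩ Y).ncard := by
  rw [inter_union_distrib_left, inter_inter_distrib_left, ncard_union_add_ncard_inter]

theorem ncard_coverSup_add_ncard_coverSup [Finite V] (hST : Disjoint S T) (hU : S ∪ T = univ)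
    (C₁ C₂ : Set V) :
    (coverSup S T C₁ C₂).ncard + (coverSup T S C₁ C₂).ncard = C₁.ncard + C₂.ncard := by
  rw [coverSup, coverSup, ncard_inter_union_inter hST, ncard_inter_union_inter hST.symm,
    ncard_eq_ncard_inter_add_ncard_inter hST hU C₁,
    ncard_eq_ncard_inter_add_ncard_inter hST hU C₂]
  have hS := ncard_inter_union_add_ncard_inter_inter S C₁ C₂
  have hT := ncard_inter_union_add_ncard_inter_inter T C₁ C₂
  omega

theorem IsBipartition.isMinVertexCover_coverSup [Finite V] (h : IsBipartition K S T)
    {C₁ C₂ : Set V} (h₁ : IsMinVertexCover K C₁) (h₂ : IsMinVertexCover K C₂) :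
    IsMinVertexCover K (coverSup S T C₁ C₂) := by
  have hsup := h.isVertexCover_coverSup h₁.1 h₂.1
  have hinf := h.symm.isVertexCover_coverSup h₁.1 h₂.1
  have hsum := ncard_coverSup_add_ncard_coverSup h.1 h.2.1 C₁ C₂
  have := h₁.2 _ hinf
  have := h₂.2 _ h₁.1
  exact h₁.of_ncard_le hsup (by omega)

end Bipartite

section CrossingGraph

variable {V : Type} {G : SimpleGraph V} {S T : Set V}

theorem crossingGraph_mono_left {S' : Set V} (hSS' : S ⊆ S') :
    crossingGraph G S T ≤ crossingGraph G S' T := fun _ _ ⟨huv, h⟩ =>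
  ⟨huv, h.imp (fun h' => ⟨hSS' h'.1, h'.2⟩) (fun h' => ⟨h'.1, hSS' h'.2⟩)⟩

theorem not_crossingGraph_adj {x : V} (hxS : x ∉ S) (hxT : x ∉ T) (y : V) :
    ¬ (crossingGraph G S T).Adj x y := by
  rintro ⟨-, ⟨hx, -⟩ | ⟨hx, -⟩⟩
  exacts [hxS hx, hxT hx]

theorem isBipartition_crossingGraph (hST : Disjoint S T) (hU : S ∪ T = univ) :
    IsBipartition (crossingGraph G S T) S T :=
  ⟨hST, hU, fun _ _ huv => huv.2⟩

theorem IsVertexCover.insert_crossingGraph {C : Set V} (x : V)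
    (hC : _root_.IsVertexCover (crossingGraph G S T) C) :
    _root_.IsVertexCover (crossingGraph G (insert x S) T) (insert x C) := by
  rintro u v ⟨huv, h⟩
  by_cases hu : u = x
  · exact Or.inl (Or.inl hu)
  by_cases hv : v = x
  · exact Or.inr (Or.inl hv)
  refine (hC ⟨huv, ?_⟩).imp Or.inr Or.inr
  exact h.imp (fun h' => ⟨h'.1.resolve_left hu, h'.2⟩) (fun h' => ⟨h'.1, h'.2.resolve_left hv⟩)

end CrossingGraph

/-- For a partition of the vertices of `G` into `A`, `B` and
`{x}`, a minimum vertex cover `C` of `G[A ∪ {x}, B]` and the `A`-König cover `C'`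
of `G[A, B]` satisfy `A ∩ C ⊆ A ∩ C'`. -/
theorem single_inter_A_subset {V : Type} [Fintype V] (G : SimpleGraph V)
    (A B : Set V) (x : V)
    (hAB : Disjoint A B) (hxA : x ∉ A) (hxB : x ∉ B)
    (hU : A ∪ B ∪ {x} = Set.univ)
    (C : Set V) (hC : IsMinVertexCover (crossingGraph G (A ∪ {x}) B) C)
    (C' : Set V) (hC' : IsKoenigCover (crossingGraph G A B) A B C') :
    A ∩ C ⊆ A ∩ C' := by
  rintro a ⟨haA, haC⟩
  rw [union_singleton] at hC hU
  have hle : crossingGraph G A B ≤ crossingGraph G (insert x A) B :=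
    crossingGraph_mono_left (subset_insert x A)
  have hx := not_crossingGraph_adj (G := G) hxA hxB
  have hxC' : x ∉ C' := hC'.1.notMem_of_forall_not_adj hx
  have hC'C : C'.ncard ≤ C.ncard := hC'.1.2 C (hC.1.anti hle)
  rcases hC'C.eq_or_lt with heq | hlt
  · exact (hC'.2 C (hC'.1.of_ncard_le (hC.1.anti hle) heq.ge)).1 ⟨haA, haC⟩
  have hC₂ : IsMinVertexCover (crossingGraph G (insert x A) B) (insert x C') :=
    hC.of_ncard_le (hC'.1.1.insert_crossingGraph x) (by rw [ncard_insert_of_notMem hxC']; omega)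
  have hbip : IsBipartition (crossingGraph G (insert x A) B) (insert x A) B :=
    isBipartition_crossingGraph (disjoint_insert_left.2 ⟨hxB, hAB⟩)
      (by rw [← hU, insert_union])
  set D := coverSup (insert x A) B C (insert x C')
  have hD : IsMinVertexCover _ D := hbip.isMinVertexCover_coverSup hC hC₂
  have hxD : x ∈ D := Or.inl ⟨mem_insert x A, Or.inr (mem_insert x C')⟩
  have hE : IsMinVertexCover (crossingGraph G A B) (D \ {x}) :=
    hC'.1.of_ncard_le ((hD.1.anti hle).diff_singleton hx)
      (by
        have hDC₂ := hD.2 _ hC₂.1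
        rw [ncard_insert_of_notMem hxC'] at hDC₂
        rw [ncard_sdiff_singleton_of_mem hxD]
        omega)
  exact (hC'.2 _ hE).1 ⟨haA, Or.inl ⟨mem_insert_of_mem x haA, Or.inl haC⟩, fun h => hxA (h ▸ haA)⟩
end

section
/- Let G be a finite connected simple graph and (T,δ) a rooted branch decomposition over V(G). For each non-root node u of T let C_u denote the δ(u)-König cover of the bipartite graph G[δ(u), V(G)∖δ(u)]. Then for every vertex x of G, the set of edges {uv ∈ E(T) : u is the child endpoint of the edge uv and x ∈ C_u} induces a connected subforest of T. -/
open SimpleGraph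

/-- A rooted branch decomposition over `V`: obtained from a branch decomposition
(a tree of maximum degree 3 with a bijection from its leaves to `V`) by
subdividing an edge and taking the new vertex as the root; hence a tree of
maximum degree 3 whose root has degree exactly 2, with a bijection from the
leaves (degree-1 vertices) to `V`. -/
structure RootedBranchDecomp (V N : Type) where
  tree : SimpleGraph N
  isTree : tree.IsTree
  root : N
  deg_le : ∀ x : N, (tree.neighborSet x).ncard ≤ 3
  root_deg : (tree.neighborSet root).ncard = 2
  leafEquiv : {x : N // (tree.neighborSet x).ncard = 1} ≃ V

/-- `u` is a descendant of `v` (equivalently `v` is an ancestor of `u`): `v` lies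
on the (unique) path from the root to `u`. -/
def RootedBranchDecomp.Desc {V N : Type} (D : RootedBranchDecomp V N)
    (v u : N) : Prop :=
  ∃ p : D.tree.Walk D.root u, p.IsPath ∧ v ∈ p.support

/-- `δ(u)`: the set of elements of `V` mapped from the leaves of the tree that
are descendants of `u`. -/
def RootedBranchDecomp.vertsBelow {V N : Type} (D : RootedBranchDecomp V N)
    (u : N) : Set V :=
  {g : V | D.Desc u (D.leafEquiv.symm g : N)}

/-- `u` is the child endpoint of the tree edge `uv`: they are adjacent and `v`
lies on the path from the root to `u`. -/
def RootedBranchDecomp.IsChild {V N : Type} (D : RootedBranchDecomp V N)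
    (u v : N) : Prop :=
  D.tree.Adj u v ∧ D.Desc v u

/-- The subgraph of the decomposition tree induced by the set of edges `uv` such
that `u` is the child endpoint and `x ∈ C_u`. -/
def coverSubforest {V N : Type} (D : RootedBranchDecomp V N) (C : N → Set V)
    (x : V) : SimpleGraph N :=
  SimpleGraph.fromRel (fun u v => D.IsChild u v ∧ x ∈ C u)


/-!
For nested cuts `A ⊆ A'`, minimum vertex covers `K` of `G[A, Aᶜ]` and `K'` of `G[A', A'ᶜ]` can be
uncrossed: the two covers obtained by exchanging their parts on `A`, `A' \ A` and `A'ᶜ` have the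
same total size, so both are minimum again. Consequently, on the `A`-side, lying in some minimum
cover passes from `A'` down to `A`, and lying in every minimum cover passes from `A'` down to `A`
as well as (on the complement side) from `A` up to `A'`. The `A`-König cover contains every
vertex of `A` lying in some minimum cover, and its vertices outside `A` lie in all of them.

Now let `u₁, u₂` be nodes with `x ∈ C_{u₁} ∩ C_{u₂}` and let `c` be the child endpoint of an edge
on the tree path between them. Then `c` is an ancestor of exactly one of them, say `u₁`, so
`δ(u₁) ⊆ δ(c)` while `δ(c)` is contained in or disjoint from `δ(u₂)`; in each case the transfer
rules give `x ∈ C_c`. Hence the whole tree path lies in the subforest.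
-/

theorem exists_isMinVertexCover {V : Type} [Finite V] (H : SimpleGraph V) :
    ∃ C : Set V, IsMinVertexCover H C := by
  obtain ⟨C, hC, hmin⟩ := Set.exists_min_image {C : Set V | _root_.IsVertexCover H C}
    Set.ncard (Set.toFinite _) ⟨Set.univ, fun u _ _ => Or.inl (Set.mem_univ u)⟩
  exact ⟨C, hC, hmin⟩

theorem IsMinVertexCover.of_ncard_le_s13 {V : Type} {H : SimpleGraph V} {K L : Set V}
    (hK : IsMinVertexCover H K) (hL : _root_.IsVertexCover H L) (h : L.ncard ≤ K.ncard) :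
    IsMinVertexCover H L :=
  ⟨hL, fun C hC => h.trans (hK.2 C hC)⟩

theorem IsKoenigCover.mem_of_mem_left {V : Type} {H : SimpleGraph V} {A B C K : Set V}
    (hC : IsKoenigCover H A B C) (hK : IsMinVertexCover H K) {x : V} (hxA : x ∈ A)
    (hxK : x ∈ K) : x ∈ C :=
  ((hC.2 K hK).1 ⟨hxA, hxK⟩).2

theorem IsKoenigCover.mem_of_mem_right {V : Type} {H : SimpleGraph V} {A B C K : Set V}
    (hC : IsKoenigCover H A B C) (hK : IsMinVertexCover H K) {x : V} (hxB : x ∈ B)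
    (hxC : x ∈ C) : x ∈ K :=
  ((hC.2 K hK).2 ⟨hxB, hxC⟩).2

section Cut

variable {V : Type} {G : SimpleGraph V}

theorem crossingGraph_compl (S : Set V) : crossingGraph G Sᶜ Sᶜᶜ = crossingGraph G S Sᶜ := by
  ext u v
  change G.Adj u v ∧ _ ↔ G.Adj u v ∧ _
  rw [compl_compl]
  tauto

theorem isVertexCover_crossingGraph_compl_iff {A K : Set V} :
    _root_.IsVertexCover (crossingGraph G A Aᶜ) K ↔
      ∀ ⦃a b : V⦄, G.Adj a b → a ∈ A → b ∉ A → a ∈ K ∨ b ∈ K := by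
  refine ⟨fun h a b hab ha hb => h ⟨hab, Or.inl ⟨ha, hb⟩⟩, ?_⟩
  rintro h u v ⟨huv, ⟨hu, hv⟩ | ⟨hu, hv⟩⟩
  · exact h huv hu hv
  · exact (h huv.symm hv hu).symm

variable {A A' K K' : Set V}

/- With `A ⊆ A'`, the first set agrees with `K ∪ K'` on `A`, with `K` on `A' \ A` and with
`K ∩ K'` outside `A'`; the second one with `K ∩ K'`, `K'` and `K ∪ K'` respectively. -/
theorem isVertexCover_uncross_left (hAA : A ⊆ A')
    (hK : _root_.IsVertexCover (crossingGraph G A Aᶜ) K)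
    (hK' : _root_.IsVertexCover (crossingGraph G A' A'ᶜ) K') :
    _root_.IsVertexCover (crossingGraph G A Aᶜ) (K ∩ K' ∪ K ∩ A' ∪ K' ∩ A) := by
  rw [isVertexCover_crossingGraph_compl_iff] at hK hK' ⊢
  intro a b hab ha hb
  have hcov := hK hab ha hb
  have hcov' := fun hb' => hK' hab (hAA ha) hb'
  have ha' := hAA ha
  simp only [Set.mem_union, Set.mem_inter_iff]
  tauto

theorem isVertexCover_uncross_right (hAA : A ⊆ A')
    (hK : _root_.IsVertexCover (crossingGraph G A Aᶜ) K)
    (hK' : _root_.IsVertexCover (crossingGraph G A' A'ᶜ) K') :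
    _root_.IsVertexCover (crossingGraph G A' A'ᶜ) (K ∩ K' ∪ K' \ A ∪ K \ A') := by
  rw [isVertexCover_crossingGraph_compl_iff] at hK hK' ⊢
  intro a b hab ha hb
  have hcov' := hK' hab ha hb
  have hcov := fun ha' => hK hab ha' fun hb' => hb (hAA hb')
  simp only [Set.mem_union, Set.mem_inter_iff, Set.mem_sdiff]
  tauto

variable [Finite V]

theorem IsMinVertexCover.uncross (hAA : A ⊆ A')
    (hK : IsMinVertexCover (crossingGraph G A Aᶜ) K)
    (hK' : IsMinVertexCover (crossingGraph G A' A'ᶜ) K') :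
    IsMinVertexCover (crossingGraph G A Aᶜ) (K ∩ K' ∪ K ∩ A' ∪ K' ∩ A) ∧
      IsMinVertexCover (crossingGraph G A' A'ᶜ) (K ∩ K' ∪ K' \ A ∪ K \ A') := by
  set L := K ∩ K' ∪ K ∩ A' ∪ K' ∩ A
  set L' := K ∩ K' ∪ K' \ A ∪ K \ A'
  have hL := isVertexCover_uncross_left hAA hK.1 hK'.1
  have hL' := isVertexCover_uncross_right hAA hK.1 hK'.1
  have hunion : L ∪ L' = K ∪ K' := by
    ext v; simp only [L, L', Set.mem_union, Set.mem_inter_iff, Set.mem_sdiff]; tauto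
  have hinter : L ∩ L' = K ∩ K' := by
    ext v
    have := @hAA v
    simp only [L, L', Set.mem_union, Set.mem_inter_iff, Set.mem_sdiff]
    tauto
  have hsum : L.ncard + L'.ncard = K.ncard + K'.ncard := by
    rw [← Set.ncard_union_add_ncard_inter, hunion, hinter, Set.ncard_union_add_ncard_inter]
  have hKL := hK.2 L hL
  have hKL' := hK'.2 L' hL'
  exact ⟨hK.of_ncard_le_s13 hL (by omega), hK'.of_ncard_le_s13 hL' (by omega)⟩

theorem exists_isMinVertexCover_mem_of_subset (hAA : A ⊆ A') {x : V} (hxA : x ∈ A)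
    (hK' : IsMinVertexCover (crossingGraph G A' A'ᶜ) K') (hxK' : x ∈ K') :
    ∃ K, IsMinVertexCover (crossingGraph G A Aᶜ) K ∧ x ∈ K := by
  obtain ⟨K, hK⟩ := exists_isMinVertexCover (crossingGraph G A Aᶜ)
  exact ⟨_, (hK.uncross hAA hK').1, Or.inr ⟨hxK', hxA⟩⟩

theorem mem_of_forall_isMinVertexCover_of_subset (hAA : A ⊆ A') {x : V} (hxA : x ∈ A)
    (hall : ∀ L, IsMinVertexCover (crossingGraph G A' A'ᶜ) L → x ∈ L)
    (hK : IsMinVertexCover (crossingGraph G A Aᶜ) K) : x ∈ K := by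
  obtain ⟨K', hK'⟩ := exists_isMinVertexCover (crossingGraph G A' A'ᶜ)
  rcases hall _ (hK.uncross hAA hK').2 with (⟨hxK, -⟩ | ⟨-, hxA'⟩) | ⟨-, hxA'⟩
  · exact hxK
  · exact absurd hxA hxA'
  · exact absurd (hAA hxA) hxA'

theorem mem_of_forall_isMinVertexCover_of_subset_compl (hAA : A ⊆ A') {x : V} (hxA' : x ∉ A')
    (hall : ∀ L, IsMinVertexCover (crossingGraph G A Aᶜ) L → x ∈ L)
    (hK' : IsMinVertexCover (crossingGraph G A' A'ᶜ) K') : x ∈ K' := by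
  rw [← crossingGraph_compl] at hall hK'
  exact mem_of_forall_isMinVertexCover_of_subset (Set.compl_subset_compl.2 hAA) hxA' hall hK'

theorem IsKoenigCover.mem_of_laminar {A₁ B K₁ K₂ : Set V}
    (hK : IsKoenigCover (crossingGraph G A Aᶜ) A Aᶜ K)
    (hK₁ : IsKoenigCover (crossingGraph G A₁ A₁ᶜ) A₁ A₁ᶜ K₁) (hA₁ : A₁ ⊆ A)
    (hK₂ : IsKoenigCover (crossingGraph G B Bᶜ) B Bᶜ K₂) (hAB : A ⊆ B ∨ Disjoint A B)
    {x : V} (hx₁ : x ∈ K₁) (hx₂ : x ∈ K₂) : x ∈ K := by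
  by_cases hxA : x ∈ A
  · rcases hAB with hAB | hAB
    · obtain ⟨L, hL, hxL⟩ := exists_isMinVertexCover_mem_of_subset hAB hxA hK₂.1 hx₂
      exact hK.mem_of_mem_left hL hxA hxL
    · have hxB : x ∈ Bᶜ := hAB.subset_compl_right hxA
      refine mem_of_forall_isMinVertexCover_of_subset hAB.subset_compl_right hxA ?_ hK.1
      rw [crossingGraph_compl]
      exact fun L hL => hK₂.mem_of_mem_right hL hxB hx₂
  · exact mem_of_forall_isMinVertexCover_of_subset_compl hA₁ hxA
      (fun L hL => hK₁.mem_of_mem_right hL (fun h => hxA (hA₁ h)) hx₁) hK.1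

end Cut

namespace SimpleGraph

variable {N : Type} {T : SimpleGraph N} {r s t u v w y z : N}

/-- `RootedBranchDecomp.Desc D v u` unfolds to `D.tree.IsAncestor D.root v u`. -/
def IsAncestor (T : SimpleGraph N) (r v u : N) : Prop :=
  ∃ p : T.Walk r u, p.IsPath ∧ v ∈ p.support

theorem IsAncestor.eq_of_root (h : T.IsAncestor r v r) : v = r := by
  obtain ⟨p, hp, hv⟩ := h
  rw [Walk.nil_iff_support_eq.1 (Walk.isPath_iff_nil.1 hp)] at hv
  exact List.mem_singleton.1 hv

theorem IsAncestor.of_mem_support_dropUntil [DecidableEq N] {p : T.Walk r z} (hp : p.IsPath)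
    (ht : t ∈ p.support) (hy : y ∈ (p.dropUntil t ht).support) : T.IsAncestor r t y := by
  set q := p.dropUntil t ht
  have hsplit : ((p.takeUntil t ht).append (q.takeUntil y hy)).append (q.dropUntil y hy) = p := by
    rw [← Walk.append_assoc, Walk.take_spec, Walk.take_spec]
  refine ⟨_, (hsplit ▸ hp : _).of_append_left, ?_⟩
  exact (Walk.mem_support_append_iff _ _).2 (Or.inl (Walk.end_mem_support _))

namespace IsTree

theorem isAncestor_iff (hT : T.IsTree) {p : T.Walk r u} (hp : p.IsPath) :
    T.IsAncestor r v u ↔ v ∈ p.support := by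
  refine ⟨?_, fun hv => ⟨p, hp, hv⟩⟩
  rintro ⟨q, hq, hv⟩
  rwa [(hT.existsUnique_path r u).unique hq hp] at hv

theorem isAncestor_trans (hT : T.IsTree) (hst : T.IsAncestor r s t)
    (htu : T.IsAncestor r t u) : T.IsAncestor r s u := by
  classical
  obtain ⟨p, hp, ht⟩ := htu
  exact ⟨p, hp, p.support_takeUntil_subset_support ht
    ((hT.isAncestor_iff (hp.takeUntil ht)).1 hst)⟩

theorem isAncestor_antisymm (hT : T.IsTree) (hst : T.IsAncestor r s t)
    (hts : T.IsAncestor r t s) : s = t := by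
  classical
  by_contra hne
  obtain ⟨p, hp, hs⟩ := id hst
  have ht := (hT.isAncestor_iff (hp.takeUntil hs)).1 hts
  exact Walk.notMem_support_takeUntil_support_takeUntil_subset (Ne.symm hne) hs ht
    ((hT.isAncestor_iff (hp.takeUntil _)).1 hst)

theorem isAncestor_or_isAncestor (hT : T.IsTree) (htz : T.IsAncestor r t z)
    (hwz : T.IsAncestor r w z) : T.IsAncestor r t w ∨ T.IsAncestor r w t := by
  classical
  obtain ⟨p, hp, ht⟩ := htz
  have hw := (hT.isAncestor_iff hp).1 hwz
  rw [← p.take_spec ht, Walk.mem_support_append_iff] at hw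
  rcases hw with hw | hw
  · exact Or.inr ⟨_, hp.takeUntil ht, hw⟩
  · exact Or.inl (.of_mem_support_dropUntil hp ht hw)

theorem isAncestor_or_isAncestor_of_adj (hT : T.IsTree) (h : T.Adj t s) :
    T.IsAncestor r t s ∨ T.IsAncestor r s t := by
  obtain ⟨p, hp, -⟩ := hT.existsUnique_path r t
  by_cases hs : s ∈ p.support
  · exact Or.inr ⟨p, hp, hs⟩
  · exact Or.inl ⟨p.concat h, hp.concat hs h, by simp⟩

theorem isAncestor_or_isAncestor_of_mem_support (hT : T.IsTree) {u₁ u₂ : N}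
    {p : T.Walk u₁ u₂} (hp : p.IsPath) (hv : v ∈ p.support) :
    T.IsAncestor r v u₁ ∨ T.IsAncestor r v u₂ := by
  classical
  obtain ⟨q₁, hq₁, -⟩ := hT.existsUnique_path r u₁
  obtain ⟨q₂, hq₂, -⟩ := hT.existsUnique_path r u₂
  obtain rfl := (hT.existsUnique_path u₁ u₂).unique hp (q₁.reverse.append q₂).bypass_isPath
  have hv' := Walk.support_bypass_subset_support _ hv
  rw [Walk.mem_support_append_iff, Walk.support_reverse, List.mem_reverse] at hv'
  exact hv'.imp (⟨q₁, hq₁, ·⟩) (⟨q₂, hq₂, ·⟩)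

theorem isAncestor_of_mem_support (hT : T.IsTree) (htz : T.IsAncestor r t z)
    {q : T.Walk t z} (hq : q.IsPath) (hy : y ∈ q.support) : T.IsAncestor r t y := by
  classical
  obtain ⟨p, hp, ht⟩ := htz
  obtain rfl := (hT.existsUnique_path t z).unique hq (hp.dropUntil ht)
  exact .of_mem_support_dropUntil hp ht hy

/-- If `c` were an ancestor of both ends, every node of the path, `d` included, would lie
below `c`. -/
theorem xor_isAncestor_of_mem_edges (hT : T.IsTree) {u₁ u₂ c d : N} {p : T.Walk u₁ u₂}
    (hp : p.IsPath) (he : s(c, d) ∈ p.edges) (hdc : T.IsAncestor r d c) :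
    Xor (T.IsAncestor r c u₁) (T.IsAncestor r c u₂) := by
  classical
  have hc := p.fst_mem_support_of_mem_edges he
  refine (xor_iff_or_and_not_and _ _).2
    ⟨hT.isAncestor_or_isAncestor_of_mem_support hp hc, fun ⟨h₁, h₂⟩ => ?_⟩
  have hd := p.snd_mem_support_of_mem_edges he
  rw [← p.take_spec hc, Walk.mem_support_append_iff] at hd
  have hcd : T.IsAncestor r c d := hd.elim
    (fun hd => hT.isAncestor_of_mem_support h₁ (hp.takeUntil hc).reverse (by simpa using hd))
    (hT.isAncestor_of_mem_support h₂ (hp.dropUntil hc))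
  exact (p.adj_of_mem_edges he).ne (hT.isAncestor_antisymm hcd hdc)

end IsTree

end SimpleGraph

namespace RootedBranchDecomp

variable {V N : Type} (D : RootedBranchDecomp V N)

def IsKoenigCoverFamily (G : SimpleGraph V) (C : N → Set V) : Prop :=
  ∀ u : N, u ≠ D.root → IsKoenigCover
    (crossingGraph G (D.vertsBelow u) (D.vertsBelow u)ᶜ)
    (D.vertsBelow u) (D.vertsBelow u)ᶜ (C u)

variable {D}

theorem IsChild.ne_root {c d : N} (h : D.IsChild c d) : c ≠ D.root := by
  rintro rfl
  exact h.1.ne (SimpleGraph.IsAncestor.eq_of_root h.2).symm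

theorem vertsBelow_mono {t u : N} (h : D.Desc t u) : D.vertsBelow u ⊆ D.vertsBelow t :=
  fun _ hg => D.isTree.isAncestor_trans h hg

theorem vertsBelow_subset_or_disjoint {t w : N} (h : ¬ D.Desc t w) :
    D.vertsBelow t ⊆ D.vertsBelow w ∨ Disjoint (D.vertsBelow t) (D.vertsBelow w) := by
  by_cases hwt : D.Desc w t
  · exact Or.inl (vertsBelow_mono hwt)
  · refine Or.inr (Set.disjoint_left.2 fun g hgt hgw => ?_)
    exact (D.isTree.isAncestor_or_isAncestor hgt hgw).elim h hwt

variable {C : N → Set V} {x : V}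

theorem IsChild.coverSubforest_adj {c d : N} (h : D.IsChild c d) (hx : x ∈ C c) :
    (coverSubforest D C x).Adj c d := by
  rw [coverSubforest, fromRel_adj]
  exact ⟨h.1.ne, Or.inl ⟨h, hx⟩⟩

theorem exists_reachable_of_coverSubforest_adj {a c : N} (h : (coverSubforest D C x).Adj a c) :
    ∃ u, u ≠ D.root ∧ x ∈ C u ∧ (coverSubforest D C x).Reachable a u := by
  rcases (fromRel_adj _ _ _).1 h with ⟨-, ⟨hac, hx⟩ | ⟨hca, hx⟩⟩
  · exact ⟨a, hac.ne_root, hx, .refl a⟩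
  · exact ⟨c, hca.ne_root, hx, h.reachable⟩

variable {G : SimpleGraph V} [Finite V]

theorem IsKoenigCoverFamily.mem_of_desc_of_not_desc (hC : D.IsKoenigCoverFamily G C)
    {u w t : N} (hu : u ≠ D.root) (hw : w ≠ D.root) (ht : t ≠ D.root)
    (htu : D.Desc t u) (htw : ¬ D.Desc t w) (hxu : x ∈ C u) (hxw : x ∈ C w) : x ∈ C t :=
  (hC t ht).mem_of_laminar (hC u hu) (vertsBelow_mono htu) (hC w hw)
    (vertsBelow_subset_or_disjoint htw) hxu hxw

theorem IsKoenigCoverFamily.mem_of_isChild_of_mem_edges (hC : D.IsKoenigCoverFamily G C)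
    {u₁ u₂ c d : N} (hu₁ : u₁ ≠ D.root) (hu₂ : u₂ ≠ D.root) (hx₁ : x ∈ C u₁) (hx₂ : x ∈ C u₂)
    {p : D.tree.Walk u₁ u₂} (hp : p.IsPath) (he : s(c, d) ∈ p.edges) (hcd : D.IsChild c d) :
    x ∈ C c := by
  rcases D.isTree.xor_isAncestor_of_mem_edges hp he hcd.2 with ⟨h₁, h₂⟩ | ⟨h₂, h₁⟩
  · exact hC.mem_of_desc_of_not_desc hu₁ hu₂ hcd.ne_root h₁ h₂ hx₁ hx₂
  · exact hC.mem_of_desc_of_not_desc hu₂ hu₁ hcd.ne_root h₂ h₁ hx₂ hx₁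

theorem IsKoenigCoverFamily.reachable_coverSubforest
    (hC : D.IsKoenigCoverFamily G C) {u₁ u₂ : N} (hu₁ : u₁ ≠ D.root) (hu₂ : u₂ ≠ D.root)
    (hx₁ : x ∈ C u₁) (hx₂ : x ∈ C u₂) : (coverSubforest D C x).Reachable u₁ u₂ := by
  obtain ⟨p, hp, -⟩ := D.isTree.existsUnique_path u₁ u₂
  refine ⟨p.transfer _ fun e he => ?_⟩
  induction e using Sym2.ind with
  | _ c d =>
    have hadj := p.adj_of_mem_edges he
    rcases D.isTree.isAncestor_or_isAncestor_of_adj hadj with hcd | hdc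
    · have hdc : D.IsChild d c := ⟨hadj.symm, hcd⟩
      have he : s(d, c) ∈ p.edges := Sym2.eq_swap ▸ he
      exact (hdc.coverSubforest_adj
        (hC.mem_of_isChild_of_mem_edges hu₁ hu₂ hx₁ hx₂ hp he hdc)).symm
    · have hcd : D.IsChild c d := ⟨hadj, hdc⟩
      exact hcd.coverSubforest_adj
        (hC.mem_of_isChild_of_mem_edges hu₁ hu₂ hx₁ hx₂ hp he hcd)

end RootedBranchDecomp

theorem koenig_subforest_connected_general {V N : Type} [Fintype V]
    (G : SimpleGraph V)
    (D : RootedBranchDecomp V N) (C : N → Set V)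
    (hC : ∀ u : N, u ≠ D.root → IsKoenigCover
      (crossingGraph G (D.vertsBelow u) (D.vertsBelow u)ᶜ)
      (D.vertsBelow u) (D.vertsBelow u)ᶜ (C u))
    (x : V) :
    ∀ a b : N, (∃ c : N, (coverSubforest D C x).Adj a c) →
      (∃ c : N, (coverSubforest D C x).Adj b c) →
      (coverSubforest D C x).Reachable a b := by
  rintro a b ⟨c, hac⟩ ⟨d, hbd⟩
  obtain ⟨u₁, hu₁, hx₁, ha⟩ := RootedBranchDecomp.exists_reachable_of_coverSubforest_adj hac
  obtain ⟨u₂, hu₂, hx₂, hb⟩ := RootedBranchDecomp.exists_reachable_of_coverSubforest_adj hbd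
  have hC : D.IsKoenigCoverFamily G C := hC
  exact ha.trans ((hC.reachable_coverSubforest hu₁ hu₂ hx₁ hx₂).trans hb.symm)

/-- For a connected graph `G` and a rooted branch decomposition
`(T,δ)` over `V(G)`, where `C_u` is the `δ(u)`-König cover of
`G[δ(u), V(G)∖δ(u)]` for each non-root node `u`, for every vertex `x` of `G` the
set of edges `{uv ∈ E(T) : u` the child endpoint, `x ∈ C_u}` induces a connected
subforest of `T`: any two nodes incident with such edges are joined by a walk
using only such edges. -/
theorem koenig_subforest_connected {V N : Type} [Fintype V] [Fintype N]
    (G : SimpleGraph V) (hG : G.Connected)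
    (D : RootedBranchDecomp V N) (C : N → Set V)
    (hC : ∀ u : N, u ≠ D.root → IsKoenigCover
      (crossingGraph G (D.vertsBelow u) (D.vertsBelow u)ᶜ)
      (D.vertsBelow u) (D.vertsBelow u)ᶜ (C u))
    (x : V) :
    ∀ a b : N, (∃ c : N, (coverSubforest D C x).Adj a c) →
      (∃ c : N, (coverSubforest D C x).Adj b c) →
      (coverSubforest D C x).Reachable a b :=
  koenig_subforest_connected_general G D C hC x
end
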